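/- Let D be a link diagram with n crossings. Then the maximal exponent of the Kauffman bracket of D satisfies M_<D> <= n + 2|s_+D| - 2, with equality if D is plus-adequate; and the minimal exponent satisfies m_<D> >= -n - 2|s_-D| + 2, with equality if D is minus-adequate. -/

import Mathlib

open LaurentPolynomial

namespace KnotPaper

/-- A combinatorial model of a link diagram: a set `V` of crossings, each with four
edge-ends (labelled `0,1,2,3` counterclockwise), together with a fixed-point-free
involution `arcs` on edge-ends describing the arcs/strands connecting the crossings. -/
structure Diagram (V : Type) where
  arcs : V × Fin 4 → V × Fin 4
  arcs_invol : Function.Involutive arcs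
  arcs_ne : ∀ x, arcs x ≠ x

/-- A state assigns `true` (positive split) or `false` (negative split) to each crossing. -/
abbrev DState (V : Type) := V → Bool

/-- The pairing of the four edge-ends of a crossing induced by splitting it:
positively (`0-1`, `2-3`) or negatively (`0-3`, `1-2`). -/
def resolveEnd {V : Type} (s : DState V) (x : V × Fin 4) : V × Fin 4 :=
  (x.1,
    if s x.1 then
      (if x.2 = 0 then 1 else if x.2 = 1 then 0 else if x.2 = 2 then 3 else 2)
    else
      (if x.2 = 0 then 3 else if x.2 = 3 then 0 else if x.2 = 1 then 2 else 1))

/-- Two edge-ends are related if joined by an arc of the diagram or by the splitting. -/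
def circuitRel {V : Type} (D : Diagram V) (s : DState V) (x y : V × Fin 4) : Prop :=
  D.arcs x = y ∨ resolveEnd s x = y

/-- `circuits D s` is the number of circuits `|sD|` of the state `s`: the number of
connected components of the splitted diagram. -/
noncomputable def circuits {V : Type} (D : Diagram V) (s : DState V) : ℕ :=
  Nat.card (Quotient (Relation.EqvGen.setoid (circuitRel D s)))

/-- The all-positive state `s₊`. -/
def sPlus (V : Type) : DState V := fun _ => true

/-- The all-negative state `s₋`. -/
def sMinus (V : Type) : DState V := fun _ => false

/-- `∑ i, s(i)` where positive splits count `+1` and negative splits `-1`. -/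
def signSum {V : Type} [Fintype V] (s : DState V) : ℤ :=
  ∑ c : V, (if s c then (1 : ℤ) else -1)

/-- The Kauffman bracket `⟨D⟩ = ∑ₛ A^{∑ᵢ s(i)} (-A⁻² - A²)^{|sD| - 1}`. -/
noncomputable def kauffman {V : Type} [Fintype V] [DecidableEq V] (D : Diagram V) :
    LaurentPolynomial ℤ :=
  ∑ s : DState V, T (signSum s) * (-T (-2) - T 2) ^ (circuits D s - 1)

/-- `s` and `s'` differ at exactly one crossing. -/
def OneOff {V : Type} (s s' : DState V) : Prop :=
  ∃ i, s i ≠ s' i ∧ ∀ j, j ≠ i → s j = s' j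

/-- `D` is plus-adequate: `|s₊D| > |sD|` for every state `s` with exactly one negative split. -/
def PlusAdequate {V : Type} (D : Diagram V) : Prop :=
  ∀ s : DState V, OneOff (sPlus V) s → circuits D s < circuits D (sPlus V)

/-- `D` is minus-adequate: `|s₋D| > |sD|` for every state `s` with exactly one positive split. -/
def MinusAdequate {V : Type} (D : Diagram V) : Prop :=
  ∀ s : DState V, OneOff (sMinus V) s → circuits D s < circuits D (sMinus V)

/-- `D` is adequate if it is both plus- and minus-adequate. -/
def Adequate {V : Type} (D : Diagram V) : Prop := PlusAdequate D ∧ MinusAdequate D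

/-- The maximal exponent `M_p` of a (nonzero) Laurent polynomial (junk value `0` for `p = 0`). -/
noncomputable def maxDeg (p : LaurentPolynomial ℤ) : ℤ := p.coeff.support.max.unbotD 0

/-- The minimal exponent `m_p` of a (nonzero) Laurent polynomial (junk value `0` for `p = 0`). -/
noncomputable def minDeg (p : LaurentPolynomial ℤ) : ℤ := p.coeff.support.min.untopD 0

/-- The breadth `B(p) = M_p - m_p` of a Laurent polynomial. -/
noncomputable def breadth (p : LaurentPolynomial ℤ) : ℤ := maxDeg p - minDeg p

end KnotPaper

/-! Write `⟨D⟩ = ∑ₛ A^{σ(s)} δ^{|sD| - 1}` with `δ = -A⁻² - A²`. Changing the split at one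
crossing changes the number of circuits by at most one, so `|sD| ≤ |s₊D| + d(s, s₊)` for the
Hamming distance `d`, while `σ(s) = n - 2 d(s, s₊)`. Hence every term has maximal degree
`σ(s) + 2|sD| - 2 ≤ n + 2|s₊D| - 2`. If `D` is plus-adequate, the first step away from `s₊`
already loses a circuit, so for `s ≠ s₊` the bound drops by `4` and `s₊` alone contributes the
coefficient `±1` in degree `n + 2|s₊D| - 2`. The minimal degree follows by substituting
`A ↦ A⁻¹`, which exchanges `s₊` and `s₋`. -/

namespace KnotPaper

open Relation Function

section Quotients

variable {α : Type*}

lemma card_quotient_eqvGen_le_of_le [Finite α] {r r' : α → α → Prop}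
    (h : ∀ x y, r x y → EqvGen r' x y) :
    Nat.card (Quotient (EqvGen.setoid r')) ≤ Nat.card (Quotient (EqvGen.setoid r)) := by
  have hle : ∀ x y, EqvGen r x y → EqvGen r' x y := fun x y hxy =>
    (EqvGen.is_equivalence r').eqvGen_iff.1 (hxy.mono h)
  exact Nat.card_le_card_of_surjective (Quotient.map' id hle)
    (Quotient.ind' fun x => ⟨Quotient.mk'' x, rfl⟩)

lemma eqvGen_or_of_eqvGen_sup_pair {r : α → α → Prop} {a b x y : α}
    (h : EqvGen (fun x y => r x y ∨ x = a ∧ y = b) x y) :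
    EqvGen r x y ∨ (EqvGen r x a ∨ EqvGen r x b) ∧ (EqvGen r y a ∨ EqvGen r y b) := by
  have hr := EqvGen.is_equivalence r
  induction h with
  | rel x y hxy =>
    rcases hxy with hxy | ⟨rfl, rfl⟩
    · exact .inl (.rel x y hxy)
    · exact .inr ⟨.inl (hr.refl _), .inr (hr.refl _)⟩
  | refl x => exact .inl (hr.refl x)
  | symm x y _ ih =>
    rcases ih with ih | ⟨hx, hy⟩
    · exact .inl (hr.symm ih)
    · exact .inr ⟨hy, hx⟩
  | trans x y z _ _ ihxy ihyz =>
    rcases ihxy with hxy | ⟨hx, hy⟩ <;> rcases ihyz with hyz | ⟨hy', hz⟩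
    · exact .inl (hr.trans hxy hyz)
    · exact .inr ⟨hy'.imp (hr.trans hxy) (hr.trans hxy), hz⟩
    · exact .inr ⟨hx, hy.imp (hr.trans (hr.symm hyz)) (hr.trans (hr.symm hyz))⟩
    · exact .inr ⟨hx, hz⟩

lemma card_quotient_eqvGen_le_sup_pair_add_one [Finite α] (r : α → α → Prop) (a b : α) :
    Nat.card (Quotient (EqvGen.setoid r)) ≤
      Nat.card (Quotient (EqvGen.setoid fun x y => r x y ∨ x = a ∧ y = b)) + 1 := by
  classical
  let r' : α → α → Prop := fun x y => r x y ∨ x = a ∧ y = b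
  have hle : ∀ x y, EqvGen r x y → EqvGen r' x y := fun _ _ h => h.mono fun _ _ => .inl
  -- the class of `a` is sent to the extra point; on the other classes the projection is injective
  let f : Quotient (EqvGen.setoid r) → Quotient (EqvGen.setoid r') ⊕ Unit := fun q =>
    if q = Quotient.mk'' a then .inr () else .inl (Quotient.map' id hle q)
  have hf : Injective f := by
    refine Quotient.ind₂' fun x y hxy => ?_
    by_cases hx : (Quotient.mk'' x : Quotient (EqvGen.setoid r)) = Quotient.mk'' a <;>
      by_cases hy : (Quotient.mk'' y : Quotient (EqvGen.setoid r)) = Quotient.mk'' a <;>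
      simp only [f, hx, hy, if_true, if_false, reduceCtorEq, Sum.inl.injEq] at hxy
    · exact hx.trans hy.symm
    · rw [Quotient.eq''] at hx hy
      have hr := EqvGen.is_equivalence r
      rcases eqvGen_or_of_eqvGen_sup_pair (Quotient.eq''.1 hxy) with h | ⟨hxa | hxb, hya | hyb⟩
      · exact Quotient.sound' h
      · exact absurd hxa hx
      · exact absurd hxa hx
      · exact absurd hya hy
      · exact Quotient.sound' (hr.trans hxb (hr.symm hyb))
  calc Nat.card (Quotient (EqvGen.setoid r))
      ≤ Nat.card (Quotient (EqvGen.setoid r') ⊕ Unit) := Nat.card_le_card_of_injective f hf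
    _ = _ := by rw [Nat.card_sum, Nat.card_unique (α := Unit)]

end Quotients

section Hamming

variable {ι β : Type*} [Fintype ι] [DecidableEq ι] [DecidableEq β]

lemma hammingDist_update_add_one {s t : ι → β} {i : ι} (h : s i ≠ t i) :
    hammingDist (update s i (t i)) t + 1 = hammingDist s t := by
  have hfilter : (Finset.univ.filter fun j => update s i (t i) j ≠ t j) =
      (Finset.univ.filter fun j => s j ≠ t j).erase i := by
    ext j
    by_cases hj : j = i <;> simp [hj, update_of_ne]
  rw [hammingDist, hammingDist, hfilter, Finset.card_erase_add_one (by simpa using h)]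

lemma le_add_hammingDist_of_le_update_add_one {f : (ι → β) → ℕ}
    (hf : ∀ s i b, f s ≤ f (update s i b) + 1) (s t : ι → β) :
    f s ≤ f t + hammingDist s t := by
  induction hd : hammingDist s t generalizing s with
  | zero => rw [hammingDist_eq_zero.1 hd]; omega
  | succ n ih =>
    obtain ⟨i, hi⟩ := Function.ne_iff.1 (hammingDist_ne_zero.1 (by omega : hammingDist s t ≠ 0))
    have := ih (update s i (t i)) (by have := hammingDist_update_add_one hi; omega)
    have := hf s i (t i)
    omega

end Hamming

section Circuits

variable {V : Type}

lemma resolveEnd_update_of_ne [DecidableEq V] (s : DState V) {i : V} (b : Bool)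
    {x : V × Fin 4} (hx : x.1 ≠ i) : resolveEnd (update s i b) x = resolveEnd s x := by
  simp [resolveEnd, update_of_ne hx]

lemma even_or_resolveEnd_even (s : DState V) (x : V × Fin 4) :
    (x.2 = 0 ∨ x.2 = 2) ∨ ((resolveEnd s x).2 = 0 ∨ (resolveEnd s x).2 = 2) := by
  obtain ⟨c, j⟩ := x
  simp only [resolveEnd]
  cases s c <;> fin_cases j <;> simp

lemma circuits_le_circuits_update_add_one [Finite V] [DecidableEq V] (D : Diagram V)
    (s : DState V) (i : V) (b : Bool) :
    circuits D s ≤ circuits D (update s i b) + 1 := by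
  -- joining the ends `0` and `2` of crossing `i` in the state `s` connects all four ends of it
  let r : V × Fin 4 → V × Fin 4 → Prop := fun x y => circuitRel D s x y ∨ x = (i, 0) ∧ y = (i, 2)
  have hr := EqvGen.is_equivalence r
  have heven : ∀ j : Fin 4, j = 0 ∨ j = 2 → EqvGen r (i, j) (i, 0) := by
    rintro j (rfl | rfl)
    · exact hr.refl _
    · exact hr.symm (.rel _ _ (.inr ⟨rfl, rfl⟩))
  have hcrossing : ∀ j : Fin 4, EqvGen r (i, j) (i, 0) := fun j => by
    rcases even_or_resolveEnd_even s (i, j) with h | h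
    · exact heven j h
    · exact hr.trans (.rel _ (resolveEnd s (i, j)) (.inl (.inr rfl))) (heven _ h)
  have hle : ∀ x y, circuitRel D (update s i b) x y → EqvGen r x y := by
    rintro x y (harc | hres)
    · exact .rel x y (.inl (.inl harc))
    by_cases hx : x.1 = i
    · obtain ⟨c, j⟩ := x
      obtain rfl : c = i := hx
      obtain rfl : y = (c, _) := hres.symm
      exact hr.trans (hcrossing j) (hr.symm (hcrossing _))
    · rw [resolveEnd_update_of_ne s b hx] at hres
      exact .rel x y (.inl (.inr hres))
  exact (card_quotient_eqvGen_le_sup_pair_add_one _ _ _).trans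
    (Nat.add_le_add_right (card_quotient_eqvGen_le_of_le hle) 1)

lemma circuits_le_add_hammingDist [Fintype V] [DecidableEq V] (D : Diagram V)
    (s t : DState V) : circuits D s ≤ circuits D t + hammingDist s t :=
  le_add_hammingDist_of_le_update_add_one (circuits_le_circuits_update_add_one D) s t

lemma one_le_circuits [Finite V] [Nonempty V] (D : Diagram V) (s : DState V) :
    1 ≤ circuits D s :=
  Nat.card_pos_iff.2 ⟨⟨Quotient.mk _ (Classical.arbitrary V, 0)⟩, inferInstance⟩

end Circuits

section LaurentDegrees

/-- The value `-A⁻² - A²` of a trivial circle. -/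
noncomputable def circleFactor : LaurentPolynomial ℤ := -T (-2) - T 2

lemma coeff_T_mul (a : ℤ) (p : LaurentPolynomial ℤ) (e : ℤ) :
    (T a * p).coeff e = p.coeff (e - a) := by
  rw [T, AddMonoidAlgebra.coeff_single_mul_apply, one_mul, neg_add_eq_sub]

lemma coeff_mul_circleFactor (p : LaurentPolynomial ℤ) (e : ℤ) :
    (p * circleFactor).coeff e = -p.coeff (e + 2) - p.coeff (e - 2) := by
  rw [mul_comm, circleFactor, sub_mul, neg_mul, AddMonoidAlgebra.coeff_sub,
    AddMonoidAlgebra.coeff_neg, Finsupp.sub_apply, Finsupp.neg_apply, coeff_T_mul, coeff_T_mul,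
    sub_neg_eq_add]

lemma coeff_circleFactor_pow_of_lt {k : ℕ} {e : ℤ} (h : 2 * k < e) :
    (circleFactor ^ k).coeff e = 0 := by
  induction k generalizing e with
  | zero => rw [pow_zero, ← T_zero, T_apply, if_neg (by omega)]
  | succ k ih =>
    rw [pow_succ, coeff_mul_circleFactor, ih (by omega), ih (by omega), sub_zero, neg_zero]

lemma coeff_circleFactor_pow_two_mul (k : ℕ) :
    (circleFactor ^ k).coeff (2 * k) = (-1) ^ k := by
  induction k with
  | zero => rw [pow_zero, ← T_zero, T_apply, if_pos (by simp), pow_zero]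
  | succ k ih =>
    rw [pow_succ, coeff_mul_circleFactor, coeff_circleFactor_pow_of_lt (by omega),
      show (2 * (k + 1 : ℕ) : ℤ) - 2 = 2 * k by push_cast; ring, ih]
    ring

lemma invert_circleFactor : invert circleFactor = circleFactor := by
  simp only [circleFactor, map_sub, map_neg, invert_T, neg_neg]
  abel

lemma maxDeg_le_of_coeff_eq_zero {p : LaurentPolynomial ℤ} {M : ℤ} (hM : 0 ≤ M)
    (h : ∀ e, M < e → p.coeff e = 0) : maxDeg p ≤ M := by
  rw [maxDeg]
  cases hmax : p.coeff.support.max with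
  | bot => exact hM
  | coe a =>
    have ha := Finsupp.mem_support_iff.1 (Finset.mem_of_max hmax)
    exact not_lt.1 fun haM => ha (h a haM)

lemma maxDeg_eq_of_coeff_eq_zero {p : LaurentPolynomial ℤ} {M : ℤ}
    (h : ∀ e, M < e → p.coeff e = 0) (hM : p.coeff M ≠ 0) : maxDeg p = M := by
  have hmax : p.coeff.support.max = M :=
    le_antisymm (Finset.max_le fun a ha => WithBot.coe_le_coe.2 <|
        not_lt.1 fun haM => Finsupp.mem_support_iff.1 ha (h a haM))
      (Finset.le_max (Finsupp.mem_support_iff.2 hM))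
  rw [maxDeg, hmax, WithBot.unbotD_coe]

lemma minDeg_eq_neg_maxDeg_invert (p : LaurentPolynomial ℤ) :
    minDeg p = -maxDeg (invert p) := by
  rcases eq_or_ne p 0 with rfl | hp
  · simp [minDeg, maxDeg]
  obtain ⟨a, ha⟩ := Finset.min_of_nonempty
    (Finsupp.support_nonempty_iff.2 (AddMonoidAlgebra.coeff_eq_zero.not.2 hp))
  have hinv : maxDeg (invert p) = -a := by
    refine maxDeg_eq_of_coeff_eq_zero (fun e he => ?_) ?_
    · rw [invert_apply]
      exact Finsupp.notMem_support_iff.1 (Finset.notMem_of_lt_min (by omega) ha)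
    · rw [invert_apply, neg_neg]
      exact Finsupp.mem_support_iff.1 (Finset.mem_of_min ha)
  rw [minDeg, ha, WithTop.untopD_coe, hinv, neg_neg]

end LaurentDegrees

section StateSum

variable {V : Type}

lemma sPlus_compl : (sPlus V)ᶜ = sMinus V := rfl

lemma OneOff.compl {s t : DState V} (h : OneOff s t) : OneOff sᶜ tᶜ := by
  obtain ⟨i, hi, hj⟩ := h
  exact ⟨i, by simpa using hi, fun j hji => by simp [hj j hji]⟩

variable [Fintype V]

lemma hammingDist_compl (s t : DState V) : hammingDist sᶜ tᶜ = hammingDist s t :=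
  hammingDist_comp (fun _ => compl) fun _ => compl_injective

lemma le_add_hammingDist_compl {k : DState V → ℕ} (hk : ∀ s t, k s ≤ k t + hammingDist s t)
    (s t : DState V) : k sᶜ ≤ k tᶜ + hammingDist s t :=
  hammingDist_compl s t ▸ hk sᶜ tᶜ

lemma signSum_eq_card_sub_hammingDist (s : DState V) :
    signSum s = Fintype.card V - 2 * hammingDist s (sPlus V) := by
  have hterm : ∀ c, (if s c then (1 : ℤ) else -1) = 1 - 2 * if s c ≠ sPlus V c then 1 else 0 := by
    intro c
    cases s c <;> simp [sPlus]
  rw [signSum, Finset.sum_congr rfl fun c _ => hterm c, Finset.sum_sub_distrib, ← Finset.mul_sum,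
    Finset.sum_boole, hammingDist]
  simp

lemma signSum_compl (s : DState V) : signSum sᶜ = -signSum s := by
  simp only [signSum, ← Finset.sum_neg_distrib]
  refine Finset.sum_congr rfl fun c _ => ?_
  cases h : s c <;> simp [h]

variable [DecidableEq V]

/-- The Kauffman state sum with `k s` in place of `|sD| - 1`. -/
noncomputable def stateSum (k : DState V → ℕ) : LaurentPolynomial ℤ :=
  ∑ s : DState V, T (signSum s) * circleFactor ^ k s

lemma kauffman_eq_stateSum (D : Diagram V) :
    kauffman D = stateSum fun s => circuits D s - 1 := rfl

lemma coeff_stateSum (k : DState V → ℕ) (e : ℤ) :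
    (stateSum k).coeff e = ∑ s, (circleFactor ^ k s).coeff (e - signSum s) := by
  simp only [stateSum, AddMonoidAlgebra.coeff_sum, Finsupp.finsetSum_apply, coeff_T_mul]

lemma invert_stateSum (k : DState V → ℕ) :
    invert (stateSum k) = stateSum fun s => k sᶜ := by
  rw [stateSum, stateSum, map_sum, ← Equiv.sum_comp (compl_involutive.toPerm _)]
  refine Finset.sum_congr rfl fun s _ => ?_
  simp [invert_circleFactor, signSum_compl]

variable {k : DState V → ℕ}

lemma coeff_stateSum_eq_zero (hk : ∀ s t, k s ≤ k t + hammingDist s t) {e : ℤ}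
    (he : Fintype.card V + 2 * k (sPlus V) < e) : (stateSum k).coeff e = 0 := by
  rw [coeff_stateSum]
  refine Finset.sum_eq_zero fun s _ => coeff_circleFactor_pow_of_lt ?_
  have := hk s (sPlus V)
  rw [signSum_eq_card_sub_hammingDist]
  omega

lemma add_two_le_add_hammingDist (hk : ∀ s t, k s ≤ k t + hammingDist s t) {t : DState V}
    (hadq : ∀ u, OneOff t u → k u < k t) {s : DState V} (hst : s ≠ t) :
    k s + 2 ≤ k t + hammingDist s t := by
  obtain ⟨i, hi⟩ := Function.ne_iff.1 hst
  have hu : OneOff t (update t i (s i)) := ⟨i, by simpa using hi.symm, fun j hj => by simp [hj]⟩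
  have hdist := hammingDist_update_add_one (Ne.symm hi)
  rw [hammingDist_comm, hammingDist_comm t] at hdist
  have := hk s (update t i (s i))
  have := hadq _ hu
  omega

lemma coeff_stateSum_top (hk : ∀ s t, k s ≤ k t + hammingDist s t)
    (hadq : ∀ u, OneOff (sPlus V) u → k u < k (sPlus V)) :
    (stateSum k).coeff (Fintype.card V + 2 * k (sPlus V)) = (-1) ^ k (sPlus V) := by
  rw [coeff_stateSum, Finset.sum_eq_single (sPlus V)]
  · rw [signSum_eq_card_sub_hammingDist, hammingDist_self, ← coeff_circleFactor_pow_two_mul]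
    congr 1
    ring
  · intro s _ hs
    apply coeff_circleFactor_pow_of_lt
    have := add_two_le_add_hammingDist hk hadq hs
    rw [signSum_eq_card_sub_hammingDist]
    omega
  · simp

lemma maxDeg_stateSum_le (hk : ∀ s t, k s ≤ k t + hammingDist s t) :
    maxDeg (stateSum k) ≤ Fintype.card V + 2 * k (sPlus V) :=
  maxDeg_le_of_coeff_eq_zero (by positivity) fun _ => coeff_stateSum_eq_zero hk

lemma maxDeg_stateSum_eq (hk : ∀ s t, k s ≤ k t + hammingDist s t)
    (hadq : ∀ u, OneOff (sPlus V) u → k u < k (sPlus V)) :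
    maxDeg (stateSum k) = Fintype.card V + 2 * k (sPlus V) :=
  maxDeg_eq_of_coeff_eq_zero (fun _ => coeff_stateSum_eq_zero hk)
    (by rw [coeff_stateSum_top hk hadq]; exact pow_ne_zero _ (by norm_num))

lemma le_minDeg_stateSum (hk : ∀ s t, k s ≤ k t + hammingDist s t) :
    -Fintype.card V - 2 * k (sMinus V) ≤ minDeg (stateSum k) := by
  have := maxDeg_stateSum_le (le_add_hammingDist_compl hk)
  rw [sPlus_compl] at this
  rw [minDeg_eq_neg_maxDeg_invert, invert_stateSum]
  linarith

lemma minDeg_stateSum_eq (hk : ∀ s t, k s ≤ k t + hammingDist s t)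
    (hadq : ∀ u, OneOff (sMinus V) u → k u < k (sMinus V)) :
    minDeg (stateSum k) = -Fintype.card V - 2 * k (sMinus V) := by
  have hadq' : ∀ u, OneOff (sPlus V) u → k uᶜ < k (sPlus V)ᶜ := fun u hu => hadq _ hu.compl
  have := maxDeg_stateSum_eq (le_add_hammingDist_compl hk) hadq'
  rw [sPlus_compl] at this
  rw [minDeg_eq_neg_maxDeg_invert, invert_stateSum, this]
  ring

end StateSum

/-- Lickorish's lemma: for an `n`-crossing link diagram `D`,
`M_⟨D⟩ ≤ n + 2|s₊D| - 2` (with equality if `D` is plus-adequate) and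
`m_⟨D⟩ ≥ -n - 2|s₋D| + 2` (with equality if `D` is minus-adequate). -/
theorem kauffman_extremal_degrees {V : Type} [Fintype V] [DecidableEq V]
    (D : Diagram V) (hn : 1 ≤ Fintype.card V) :
    (maxDeg (kauffman D) ≤ (Fintype.card V : ℤ) + 2 * circuits D (sPlus V) - 2
      ∧ (PlusAdequate D →
          maxDeg (kauffman D) = (Fintype.card V : ℤ) + 2 * circuits D (sPlus V) - 2))
    ∧ (-(Fintype.card V : ℤ) - 2 * circuits D (sMinus V) + 2 ≤ minDeg (kauffman D)
      ∧ (MinusAdequate D →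
          minDeg (kauffman D) = -(Fintype.card V : ℤ) - 2 * circuits D (sMinus V) + 2)) := by
  have : Nonempty V := Fintype.card_pos_iff.1 hn
  have hpos := one_le_circuits D
  have hcast (s : DState V) : ((circuits D s - 1 : ℕ) : ℤ) = circuits D s - 1 := by
    have := hpos s
    omega
  have hk (s t : DState V) : circuits D s - 1 ≤ circuits D t - 1 + hammingDist s t := by
    have := circuits_le_add_hammingDist D s t
    omega
  have hadq {t : DState V} (h : ∀ u, OneOff t u → circuits D u < circuits D t) (u : DState V)
      (hu : OneOff t u) : circuits D u - 1 < circuits D t - 1 := by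
    have := h u hu
    have := hpos u
    omega
  rw [kauffman_eq_stateSum]
  refine ⟨⟨?_, fun hplus => ?_⟩, ?_, fun hminus => ?_⟩
  · linarith [maxDeg_stateSum_le hk, hcast (sPlus V)]
  · rw [maxDeg_stateSum_eq hk (hadq hplus), hcast]
    ring
  · linarith [le_minDeg_stateSum hk, hcast (sMinus V)]
  · rw [minDeg_stateSum_eq hk (hadq hminus), hcast]
    ring

end KnotPaper
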